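/- arXiv:1107.4153 — 2 statements merged into one kernel-verified Lean document; each statement's English description precedes it below -/
import Mathlib

section
/- Consider a finite congestion game with M players, N resources, each player's strategy set being the set of single resources {1,...,N}, and payoff functions h_j : ℕ → ℝ on resource j depending only on the number of players choosing j. Define the Rosenthal potential φ(σ) = ∑_{j=1}^N ∑_{k=1}^{K_j(σ)} h_j(k), where K_j(σ) is the number of players choosing resource j under profile σ. Then for any profile σ and any unilateral deviation of player i from resource j to resource j', the change in player i's payoff equals the change in φ: h_{j'}(K_{j'}(σ)+1) − h_j(K_j(σ)) = φ(σ') − φ(σ), where σ' is the profile after the deviation. -/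
open Finset

/-- Number of players choosing resource `j` under profile `σ`. -/
def congCount {M N : ℕ} (σ : Fin M → Fin N) (j : Fin N) : ℕ :=
  (Finset.univ.filter fun i => σ i = j).card

/-- Rosenthal potential `φ(σ) = ∑_j ∑_{k=1}^{K_j(σ)} h_j(k)`. -/
def rosenthalPotential {M N : ℕ} (h : Fin N → ℕ → ℝ) (σ : Fin M → Fin N) : ℝ :=
  ∑ j : Fin N, ∑ k ∈ Finset.Icc 1 (congCount σ j), h j k

lemma congCount_update_same {M N : ℕ} (σ : Fin M → Fin N) (i : Fin M) (j' : Fin N)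
    (hne : j' ≠ σ i) : congCount (Function.update σ i j') j' = congCount σ j' + 1 := by
  unfold congCount
  have hset : (Finset.univ.filter fun i' => Function.update σ i j' i' = j') =
      insert i (Finset.univ.filter fun i' => σ i' = j') := by
    ext x
    simp only [mem_filter, mem_univ, true_and, mem_insert]
    rcases eq_or_ne x i with rfl | hx
    · simp [Function.update_self]
    · simp [Function.update_of_ne hx, hx]
  rw [hset, Finset.card_insert_of_notMem]
  simp [hne.symm]

lemma congCount_update_old {M N : ℕ} (σ : Fin M → Fin N) (i : Fin M) (j' : Fin N)
    (hne : j' ≠ σ i) : congCount σ (σ i) = congCount (Function.update σ i j') (σ i) + 1 := by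
  unfold congCount
  have hset : (Finset.univ.filter fun i' => Function.update σ i j' i' = σ i) =
      (Finset.univ.filter fun i' => σ i' = σ i).erase i := by
    ext x
    simp only [mem_filter, mem_univ, true_and, mem_erase]
    rcases eq_or_ne x i with rfl | hx
    · simp [Function.update_self, hne]
    · simp [Function.update_of_ne hx, hx]
  rw [hset, Finset.card_erase_of_mem (by simp)]
  have hpos : 0 < (Finset.univ.filter fun i' => σ i' = σ i).card :=
    Finset.card_pos.mpr ⟨i, by simp⟩
  omega

lemma congCount_update_other {M N : ℕ} (σ : Fin M → Fin N) (i : Fin M) (j' j : Fin N)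
    (h1 : j ≠ j') (h2 : j ≠ σ i) : congCount (Function.update σ i j') j = congCount σ j := by
  unfold congCount
  congr 1
  ext x
  simp only [mem_filter, mem_univ, true_and]
  rcases eq_or_ne x i with rfl | hx
  · simp [Function.update_self, h1.symm, h2.symm]
  · simp [Function.update_of_ne hx]

/-- In a singleton congestion game, a unilateral deviation of player `i` from its
resource `σ i` to a different resource `j'` changes the Rosenthal potential by exactly
the change in player `i`'s payoff:
`h_{j'}(K_{j'}(σ)+1) − h_{σ i}(K_{σ i}(σ)) = φ(σ') − φ(σ)`. -/
theorem rosenthal_potential_deviation {M N : ℕ} (h : Fin N → ℕ → ℝ)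
    (σ : Fin M → Fin N) (i : Fin M) (j' : Fin N) (hne : j' ≠ σ i) :
    h j' (congCount σ j' + 1) - h (σ i) (congCount σ (σ i)) =
      rosenthalPotential h (Function.update σ i j') - rosenthalPotential h σ := by
  unfold rosenthalPotential
  rw [← Finset.sum_sub_distrib]
  have key : ∀ j : Fin N,
      (∑ k ∈ Finset.Icc 1 (congCount (Function.update σ i j') j), h j k) -
        (∑ k ∈ Finset.Icc 1 (congCount σ j), h j k) =
      (if j = j' then h j' (congCount σ j' + 1) else 0) -
      (if j = σ i then h (σ i) (congCount σ (σ i)) else 0) := by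
    intro j
    rcases eq_or_ne j j' with rfl | h1
    · rw [if_pos rfl, if_neg hne, congCount_update_same σ i j hne,
        Finset.sum_Icc_succ_top (by omega)]
      ring
    · rcases eq_or_ne j (σ i) with rfl | h2
      · rw [if_neg h1, if_pos rfl]
        rw [congCount_update_old σ i j' hne,
          Finset.sum_Icc_succ_top (by omega)]
        rw [← congCount_update_old σ i j' hne]
        ring
      · rw [if_neg h1, if_neg h2, congCount_update_other σ i j' j h1 h2]
        ring
  rw [Finset.sum_congr rfl fun j _ => key j, Finset.sum_sub_distrib,
    Finset.sum_ite_eq' Finset.univ j', Finset.sum_ite_eq' Finset.univ (σ i)]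
  simp
end

section
/- For fixed reals U ∈ [0,1] and p ∈ (0,1), define f(γ) = ((p − γ/N)·exp(γU/(pN))) / (1 + ((p − γ/N)/(1−γ))·(exp(γU/(pN)) − 1)) + γ/N for γ in a neighborhood of 0. Then f(0) = p and f'(0) = U(1−p)/N. -/
open Real

/-- Continuous-time limit of the Exp3 update for the played arm: with
`f(γ) = ((p − γ/N) e^(γU/(pN))) / (1 + ((p − γ/N)/(1−γ)) (e^(γU/(pN)) − 1)) + γ/N`,
we have `f(0) = p` and `f'(0) = U(1−p)/N`. -/
theorem exp3_played_arm_derivative (U p N : ℝ) (hU0 : 0 ≤ U) (hU1 : U ≤ 1)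
    (hp0 : 0 < p) (hp1 : p < 1) (hN : 0 < N) :
    (fun γ : ℝ => ((p - γ / N) * Real.exp (γ * U / (p * N))) /
        (1 + ((p - γ / N) / (1 - γ)) * (Real.exp (γ * U / (p * N)) - 1)) + γ / N) 0 = p ∧
    HasDerivAt (fun γ : ℝ => ((p - γ / N) * Real.exp (γ * U / (p * N))) /
        (1 + ((p - γ / N) / (1 - γ)) * (Real.exp (γ * U / (p * N)) - 1)) + γ / N)
      (U * (1 - p) / N) 0 := by
  have hpN : p * N ≠ 0 := by positivity
  have hNne : N ≠ 0 := ne_of_gt hN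
  refine ⟨by simp, ?_⟩
  have hA : HasDerivAt (fun γ : ℝ => p - γ / N) (-(1 / N)) 0 := by
    simpa using ((hasDerivAt_id (0:ℝ)).div_const N).const_sub p
  have hE : HasDerivAt (fun γ : ℝ => Real.exp (γ * U / (p * N))) (U / (p * N)) 0 := by
    have h1 : HasDerivAt (fun γ : ℝ => γ * U / (p * N)) (U / (p * N)) 0 := by
      simpa using ((hasDerivAt_id (0:ℝ)).mul_const U).div_const (p * N)
    simpa using h1.exp
  have hn : HasDerivAt (fun γ : ℝ => (p - γ / N) * Real.exp (γ * U / (p * N)))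
      (-(1 / N) * 1 + p * (U / (p * N))) 0 := by
    have := hA.fun_mul hE
    simpa using this
  have hden : HasDerivAt (fun γ : ℝ => (1:ℝ) - γ) (-1) 0 := by
    simpa using (hasDerivAt_id (0:ℝ)).const_sub 1
  have hq : HasDerivAt (fun γ : ℝ => (p - γ / N) / (1 - γ))
      ((-(1 / N) * (1 - 0) - (p - 0 / N) * (-1)) / (1 - 0) ^ 2) 0 := by
    exact hA.div hden (by norm_num)
  have hEm : HasDerivAt (fun γ : ℝ => Real.exp (γ * U / (p * N)) - 1) (U / (p * N)) 0 := by
    simpa using hE.sub_const 1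
  have hd : HasDerivAt (fun γ : ℝ => 1 + ((p - γ / N) / (1 - γ)) * (Real.exp (γ * U / (p * N)) - 1))
      (((-(1 / N) * (1 - 0) - (p - 0 / N) * (-1)) / (1 - 0) ^ 2) * (Real.exp (0 * U / (p * N)) - 1)
        + ((p - 0 / N) / (1 - 0)) * (U / (p * N))) 0 := by
    simpa using (hq.mul hEm).const_add 1
  have hd0 : (1 + ((p - (0:ℝ) / N) / (1 - 0)) * (Real.exp (0 * U / (p * N)) - 1)) ≠ 0 := by
    simp
  have hf := (hn.fun_div hd hd0).fun_add (((hasDerivAt_id (0:ℝ)).div_const N))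
  refine hf.congr_deriv ?_
  simp only [Real.exp_zero, zero_div, zero_mul, mul_zero, sub_zero, div_one, one_pow]
  field_simp
  ring
end
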